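/- arXiv:2404.03426 — 2 statements merged into one kernel-verified Lean document; each statement's English description precedes it below -/
import Mathlib

section
/- Let T and T' be decision trees over ℝ^d (possibly T = T'), u a leaf of T, v a leaf of T', x ∈ ℝ^d, S ⊆ {1,…,d}, and let x' be the perturbed input obtained from x by adding independent noise δ_q with continuous c.d.f. F_q to each coordinate q ∈ S and leaving coordinates outside S unchanged. Writing l_{u,v,q}, r_{u,v,q} for the endpoints of the interval I_{u,q} ∩ I_{v,q} whenever this intersection is nonempty, the probability that the evaluation of T on x' reaches u and simultaneously the evaluation of T' on x' reaches v equals Π(u,v) := (Π_{q∈(Q_u∪Q_v)∖S} 𝟙[x_q ∈ I_{u,q} ∩ I_{v,q}]) · Π_{q∈(Q_u∪Q_v)∩S} (F̄_q(r_{u,v,q} − x_q) − F̄_q(l_{u,v,q} − x_q)), where F̄_q extends F_q by F̄_q(−∞) := 0 and F̄_q(+∞) := 1, and where the joint probability is 0 whenever I_{u,q} ∩ I_{v,q} = ∅ for some q ∈ Q_u ∪ Q_v. -/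
/-!
Reaching a leaf is a conjunction of threshold tests along its path, so `T` reaches `u` on `z`
iff `z q ∈ I_{u,q}` for every feature `q`. Hence both trees reach `u` and `v` iff
`x'_q ∈ I_{u,q} ∩ I_{v,q}` for each `q ∈ Q_u ∪ Q_v`, and this intersection is again a
left-closed, right-open interval `[l, r)`. For `q ∉ S` the test is deterministic and contributes
the indicator; the remaining tests depend on independent noises, so their joint probability
factorises, and `P(l ≤ x_q + δ_q < r) = F̄_q(r - x_q) - F̄_q(l - x_q)` because a continuous
c.d.f. puts no mass on single points, so `P(δ_q < t) = F_q(t)`.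
-/

open MeasureTheory ProbabilityTheory

/-- A decision tree over `ℝ^d`: each internal node has a split feature `q`, a threshold `t`,
a left child `a` and a right child `b`; each leaf carries a real value `y`. -/
inductive DTree (d : ℕ) : Type
  | leaf (y : ℝ) : DTree d
  | node (q : Fin d) (t : ℝ) (a b : DTree d) : DTree d

namespace DTree

variable {d : ℕ}

/-- Evaluation of a decision tree: at `node q t a b` descend to `a` if `x q < t`, else to `b`. -/
noncomputable def eval : DTree d → (Fin d → ℝ) → ℝ
  | leaf y, _ => y
  | node q t a b, x => if x q < t then a.eval x else b.eval x

/-- The root-to-leaf path (`false` = left, `true` = right) followed when evaluating on `x`. -/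
noncomputable def evalPath : DTree d → (Fin d → ℝ) → List Bool
  | leaf _, _ => []
  | node q t a b, x => if x q < t then false :: a.evalPath x else true :: b.evalPath x

/-- The subtree reached by following the path `p` from the root (if any). -/
def subtreeAt : DTree d → List Bool → Option (DTree d)
  | T, [] => some T
  | leaf _, _ :: _ => none
  | node _ _ a _, false :: p => a.subtreeAt p
  | node _ _ _ b, true :: p => b.subtreeAt p

/-- `p` is the position of a leaf of `T`. -/
def IsLeafPath (T : DTree d) (p : List Bool) : Prop :=
  ∃ y : ℝ, T.subtreeAt p = some (leaf y)

/-- The value of the leaf at position `p` (junk value `0` if `p` is not a leaf position). -/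
def leafVal (T : DTree d) (p : List Bool) : ℝ :=
  match T.subtreeAt p with
  | some (leaf y) => y
  | _ => 0

/-- The set of positions of leaves of `T`. -/
def leafPaths : DTree d → Finset (List Bool)
  | leaf _ => {[]}
  | node _ _ a b => a.leafPaths.image (false :: ·) ∪ b.leafPaths.image (true :: ·)

/-- `Q_w`: the set of split features of the internal nodes strictly above position `p`. -/
def pathFeatures : DTree d → List Bool → Finset (Fin d)
  | _, [] => ∅
  | leaf _, _ :: _ => ∅
  | node q _ a _, false :: p => insert q (a.pathFeatures p)
  | node q _ _ b, true :: p => insert q (b.pathFeatures p)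

/-- Left endpoint of the interval `I_{w,q}`: start from `⊥ = -∞` and take the max of the
thresholds of nodes splitting on `q` where the path turns right. -/
noncomputable def lo : DTree d → List Bool → Fin d → EReal
  | _, [], _ => ⊥
  | leaf _, _ :: _, _ => ⊥
  | node _ _ a _, false :: p, q => a.lo p q
  | node q' t _ b, true :: p, q => if q' = q then max (t : EReal) (b.lo p q) else b.lo p q

/-- Right endpoint of the interval `I_{w,q}`: start from `⊤ = +∞` and take the min of the
thresholds of nodes splitting on `q` where the path turns left. -/
noncomputable def hi : DTree d → List Bool → Fin d → EReal
  | _, [], _ => ⊤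
  | leaf _, _ :: _, _ => ⊤
  | node q' t a _, false :: p, q => if q' = q then min (t : EReal) (a.hi p q) else a.hi p q
  | node _ _ _ b, true :: p, q => b.hi p q

/-- The interval `I_{w,q} ⊆ ℝ` (left-closed, right-open, with possibly infinite endpoints). -/
def interval (T : DTree d) (p : List Bool) (q : Fin d) : Set ℝ :=
  {x : ℝ | T.lo p q ≤ (x : EReal) ∧ (x : EReal) < T.hi p q}

end DTree

/-- `F̄`: a c.d.f. `F : ℝ → ℝ` extended to `EReal` by `F̄(-∞) = 0` and `F̄(+∞) = 1`. -/
noncomputable def extendCDF (F : ℝ → ℝ) (t : EReal) : ℝ :=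
  if t = ⊥ then 0 else if t = ⊤ then 1 else F t.toReal

open Set

lemma forall_mem_ite_inter {ι α : Type*} [DecidableEq ι] (i : ι) (C : Set α)
    (A : ι → Set α) (x : ι → α) :
    (∀ j, x j ∈ if i = j then A j ∩ C else A j) ↔ x i ∈ C ∧ ∀ j, x j ∈ A j := by
  refine ⟨fun h => ⟨(by simpa using h i : x i ∈ A i ∩ C).2, fun j => ?_⟩,
    fun ⟨hi, h⟩ j => ?_⟩
  · have := h j
    split_ifs at this
    exacts [this.1, this]
  · split_ifs with hij
    · exact ⟨h j, hij ▸ hi⟩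
    · exact h j

namespace DTree

variable {d : ℕ}

theorem interval_eq_preimage_Ico (T : DTree d) (p : List Bool) (q : Fin d) :
    T.interval p q = (↑) ⁻¹' Ico (T.lo p q) (T.hi p q) :=
  rfl

theorem measurableSet_interval (T : DTree d) (p : List Bool) (q : Fin d) :
    MeasurableSet (T.interval p q) :=
  measurable_coe_real_ereal measurableSet_Ico

theorem interval_inter_interval (T T' : DTree d) (u v : List Bool) (q : Fin d) :
    T.interval u q ∩ T'.interval v q
      = (↑) ⁻¹' Ico (max (T.lo u q) (T'.lo v q)) (min (T.hi u q) (T'.hi v q)) := by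
  rw [interval_eq_preimage_Ico, interval_eq_preimage_Ico, ← preimage_inter, Ico_inter_Ico]

theorem interval_node_false (q : Fin d) (t : ℝ) (a b : DTree d) (p : List Bool) (q' : Fin d) :
    (node q t a b).interval (false :: p) q'
      = if q = q' then a.interval p q' ∩ Iio t else a.interval p q' := by
  ext y
  simp only [interval, lo, hi]
  split_ifs <;> simp [and_comm, and_left_comm]

theorem interval_node_true (q : Fin d) (t : ℝ) (a b : DTree d) (p : List Bool) (q' : Fin d) :
    (node q t a b).interval (true :: p) q'
      = if q = q' then b.interval p q' ∩ Ici t else b.interval p q' := by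
  ext y
  simp only [interval, lo, hi]
  split_ifs
  · simp only [mem_ofPred_eq, mem_inter_iff, mem_Ici, max_le_iff, EReal.coe_le_coe_iff]
    tauto
  · rfl

theorem evalPath_eq_iff_forall_mem_interval :
    ∀ {T : DTree d} {p : List Bool}, T.IsLeafPath p →
      ∀ x : Fin d → ℝ, T.evalPath x = p ↔ ∀ q, x q ∈ T.interval p q
  | leaf _, [], _, x => by simp [evalPath, interval, lo, hi]
  | leaf _, _ :: _, ⟨_, h⟩, _ => by simp [subtreeAt] at h
  | node _ _ _ _, [], ⟨_, h⟩, _ => by simp [subtreeAt] at h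
  | node q t a b, false :: p, hp, x => by
      simp only [interval_node_false, forall_mem_ite_inter, mem_Iio,
        ← evalPath_eq_iff_forall_mem_interval (T := a) hp x, evalPath]
      split_ifs with h <;> simp [h]
  | node q t a b, true :: p, hp, x => by
      simp only [interval_node_true, forall_mem_ite_inter, mem_Ici,
        ← evalPath_eq_iff_forall_mem_interval (T := b) hp x, evalPath]
      split_ifs with h <;> simp [h, le_of_not_gt]

theorem interval_eq_univ_of_notMem :
    ∀ {T : DTree d} {p : List Bool} {q : Fin d}, q ∉ T.pathFeatures p → T.interval p q = univ
  | leaf _, [], _, _ | node _ _ _ _, [], _, _ | leaf _, _ :: _, _, _ => by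
      ext; simp [interval, lo, hi]
  | node q' _ a _, false :: p, q, h => by
      simp only [pathFeatures, Finset.mem_insert, not_or] at h
      rw [interval_node_false, if_neg (Ne.symm h.1), interval_eq_univ_of_notMem h.2]
  | node q' _ _ b, true :: p, q, h => by
      simp only [pathFeatures, Finset.mem_insert, not_or] at h
      rw [interval_node_true, if_neg (Ne.symm h.1), interval_eq_univ_of_notMem h.2]

theorem evalPath_eq_and_evalPath_eq_iff {T T' : DTree d} {u v : List Bool}
    (hu : T.IsLeafPath u) (hv : T'.IsLeafPath v) (x : Fin d → ℝ) :
    (T.evalPath x = u ∧ T'.evalPath x = v) ↔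
      ∀ q ∈ T.pathFeatures u ∪ T'.pathFeatures v,
        x q ∈ T.interval u q ∩ T'.interval v q := by
  rw [evalPath_eq_iff_forall_mem_interval hu, evalPath_eq_iff_forall_mem_interval hv,
    ← forall_and]
  refine forall_congr' fun q => ⟨fun h _ => h, fun h => ?_⟩
  by_cases hq : q ∈ T.pathFeatures u ∪ T'.pathFeatures v
  · exact h hq
  · simp only [Finset.mem_union, not_or] at hq
    simp [interval_eq_univ_of_notMem hq.1, interval_eq_univ_of_notMem hq.2]

end DTree

section ContinuousCDF

variable {Ω : Type*} [MeasurableSpace Ω] {μ : Measure Ω} [IsProbabilityMeasure μ]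
  {δ : Ω → ℝ} {F : ℝ → ℝ}

lemma measure_lt_eq_ofReal_of_continuous_cdf (hδ : Measurable δ)
    (hF : F = fun t => (μ {ω | δ ω ≤ t}).toReal) (hFc : Continuous F) (t : ℝ) :
    μ {ω | δ ω < t} = ENNReal.ofReal (F t) := by
  have := Measure.isProbabilityMeasure_map (μ := μ) hδ.aemeasurable
  have hcdf : ⇑(cdf (μ.map δ)) = F := by
    ext s
    rw [cdf_eq_real, measureReal_def, Measure.map_apply hδ measurableSet_Iic, hF]
    rfl
  calc μ {ω | δ ω < t} = μ.map δ (Iio t) := (Measure.map_apply hδ measurableSet_Iio).symm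
    _ = (cdf (μ.map δ)).measure (Iio t) := by rw [measure_cdf]
    _ = ENNReal.ofReal (F t) := by
      rw [StieltjesFunction.measure_Iio _ (tendsto_cdf_atBot _), sub_zero, hcdf,
        (hFc.continuousAt.continuousWithinAt).leftLim_eq]

lemma measure_coe_lt_ereal_eq_ofReal_extendCDF (hδ : Measurable δ)
    (hF : F = fun t => (μ {ω | δ ω ≤ t}).toReal) (hFc : Continuous F) (t : EReal) :
    μ {ω | (δ ω : EReal) < t} = ENNReal.ofReal (extendCDF F t) := by
  induction t with
  | bot => simp [extendCDF]
  | top => simp [extendCDF]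
  | coe t => simpa [extendCDF] using measure_lt_eq_ofReal_of_continuous_cdf hδ hF hFc t

lemma extendCDF_nonneg (hF : ∀ t, 0 ≤ F t) (t : EReal) : 0 ≤ extendCDF F t := by
  unfold extendCDF
  split_ifs <;> simp [hF]

lemma EReal.coe_add_lt_iff_lt_sub (x y : ℝ) (R : EReal) :
    ((x + y : ℝ) : EReal) < R ↔ (y : EReal) < R - x := by
  rw [EReal.lt_sub_iff_add_lt (.inl (EReal.coe_ne_bot x)) (.inl (EReal.coe_ne_top x)),
    add_comm, EReal.coe_add]

lemma measureReal_add_mem_Ico (hδ : Measurable δ)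
    (hF : F = fun t => (μ {ω | δ ω ≤ t}).toReal) (hFc : Continuous F) (x : ℝ) {L R : EReal}
    (hLR : L ≤ R) :
    μ.real {ω | ((x + δ ω : ℝ) : EReal) ∈ Ico L R}
      = extendCDF F (R - x) - extendCDF F (L - x) := by
  have hlt (t : EReal) : μ {ω | ((x + δ ω : ℝ) : EReal) < t}
      = ENNReal.ofReal (extendCDF F (t - x)) := by
    simp only [EReal.coe_add_lt_iff_lt_sub]
    exact measure_coe_lt_ereal_eq_ofReal_extendCDF hδ hF hFc _
  have hF0 (t : ℝ) : 0 ≤ F t := hF ▸ ENNReal.toReal_nonneg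
  have hsub : {ω | ((x + δ ω : ℝ) : EReal) < L} ⊆ {ω | ((x + δ ω : ℝ) : EReal) < R} :=
    fun ω h => lt_of_lt_of_le h hLR
  have hmeas : MeasurableSet {ω | ((x + δ ω : ℝ) : EReal) < L} :=
    measurableSet_lt (measurable_coe_real_ereal.comp (measurable_const.add hδ)) measurable_const
  have hIco : {ω | ((x + δ ω : ℝ) : EReal) ∈ Ico L R}
      = {ω | ((x + δ ω : ℝ) : EReal) < R} \ {ω | ((x + δ ω : ℝ) : EReal) < L} := by
    ext ω
    simp [and_comm]
  rw [measureReal_def, hIco, measure_sdiff hsub hmeas.nullMeasurableSet (measure_ne_top _ _),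
    ENNReal.toReal_sub_of_le (measure_mono hsub) (measure_ne_top _ _), hlt, hlt,
    ENNReal.toReal_ofReal (extendCDF_nonneg hF0 _),
    ENNReal.toReal_ofReal (extendCDF_nonneg hF0 _)]

end ContinuousCDF

section Independence

variable {Ω ι β : Type*} [MeasurableSpace Ω] {μ : Measure Ω} [MeasurableSpace β]

lemma ProbabilityTheory.iIndepFun.measure_biInter_preimage_of_subset {S J : Finset ι}
    {X : ι → Ω → β} (hX : iIndepFun (fun i : S => X i) μ) (hJ : J ⊆ S) {B : ι → Set β}
    (hB : ∀ i ∈ J, MeasurableSet (B i)) :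
    μ (⋂ i ∈ J, X i ⁻¹' B i) = ∏ i ∈ J, μ (X i ⁻¹' B i) := by
  classical
  have h := hX.meas_biInter (S := J.subtype (· ∈ S)) (s := fun i => X i ⁻¹' B i)
    fun i hi => ⟨B i, hB i (Finset.mem_subtype.1 hi), rfl⟩
  rw [Finset.prod_subtype_eq_prod_filter fun i => μ (X i ⁻¹' B i),
    Finset.filter_true_of_mem hJ] at h
  rw [← h]
  congr 1
  ext ω
  simp only [mem_iInter, Finset.mem_subtype, Subtype.forall]
  exact ⟨fun h i _ hi => h i hi, fun h i hi => h i (hJ hi) hi⟩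

lemma measureReal_biInter_perturbed [DecidableEq ι] {S : Finset ι} {δ : ι → Ω → ℝ}
    (hδ : iIndepFun (fun i : S => δ i) μ) (K : Finset ι) (x : ι → ℝ) {B : ι → Set ℝ}
    (hB : ∀ i, MeasurableSet (B i)) :
    μ.real (⋂ i ∈ K, {ω | (if i ∈ S then x i + δ i ω else x i) ∈ B i})
      = (∏ i ∈ K \ S, (B i).indicator (fun _ => (1 : ℝ)) (x i))
        * ∏ i ∈ K ∩ S, μ.real {ω | x i + δ i ω ∈ B i} := by
  have hsplit : (⋂ i ∈ K, {ω | (if i ∈ S then x i + δ i ω else x i) ∈ B i})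
      = {_ω | ∀ i ∈ K \ S, x i ∈ B i}
        ∩ ⋂ i ∈ K ∩ S, δ i ⁻¹' ((x i + ·) ⁻¹' B i) := by
    ext ω
    simp only [mem_iInter, mem_inter_iff, mem_ofPred_eq, mem_preimage, Finset.mem_sdiff,
      Finset.mem_inter]
    constructor
    · intro h
      exact ⟨fun i ⟨hK, hS⟩ => by simpa [hS] using h i hK,
        fun i ⟨hK, hS⟩ => by simpa [hS] using h i hK⟩
    · rintro ⟨h₁, h₂⟩ i hK
      split_ifs with hS
      exacts [h₂ i ⟨hK, hS⟩, h₁ i ⟨hK, hS⟩]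
  classical
  simp only [hsplit, indicator_apply, Finset.prod_boole]
  by_cases h : ∀ i ∈ K \ S, x i ∈ B i
  · rw [if_pos h, one_mul, eq_univ_of_forall (s := {_ω : Ω | _}) fun _ => h, univ_inter,
      measureReal_def, hδ.measure_biInter_preimage_of_subset Finset.inter_subset_right
        fun i _ => measurable_const_add (x i) (hB i),
      ENNReal.toReal_prod]
    rfl
  · rw [if_neg h, zero_mul, eq_empty_of_forall_notMem (s := {_ω : Ω | _}) fun _ => h,
      empty_inter, measureReal_empty]

end Independence

/-- Let `u` be a leaf of `T` and `v` a leaf of `T'` (possibly `T = T'`),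
`x ∈ ℝ^d`, `S ⊆ [d]`, and let `x'` be obtained from `x` by adding independent noise `δ_q` with
continuous c.d.f. `F_q` on each coordinate `q ∈ S`. If all intersections
`I_{u,q} ∩ I_{v,q}`, `q ∈ Q_u ∪ Q_v`, are nonempty (so that their endpoints `l_{u,v,q} =
max(l_{u,q}, l_{v,q})` and `r_{u,v,q} = min(r_{u,q}, r_{v,q})` are well defined), the joint
probability that `T` reaches `u` and `T'` reaches `v` on `x'` equals
`Π(u,v) = (Π_{q ∈ (Q_u∪Q_v) \ S} 𝟙[x_q ∈ I_{u,q} ∩ I_{v,q}]) ·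
Π_{q ∈ (Q_u∪Q_v) ∩ S} (F̄_q(r_{u,v,q} − x_q) − F̄_q(l_{u,v,q} − x_q))`; and the joint
probability is `0` whenever some intersection `I_{u,q} ∩ I_{v,q}`, `q ∈ Q_u ∪ Q_v`, is empty. -/
theorem dtree_joint_reach_prob_closed_form {d : ℕ} (T T' : DTree d) (u v : List Bool)
    (hu : T.IsLeafPath u) (hv : T'.IsLeafPath v) (x : Fin d → ℝ) (S : Finset (Fin d))
    {Ω : Type*} [MeasurableSpace Ω] (μ : MeasureTheory.Measure Ω)
    [MeasureTheory.IsProbabilityMeasure μ]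
    (δ : Fin d → Ω → ℝ) (hδmeas : ∀ q ∈ S, Measurable (δ q))
    (hindep : ProbabilityTheory.iIndepFun
      (fun q : {q : Fin d // q ∈ S} => δ q.1) μ)
    (F : Fin d → ℝ → ℝ) (hF : ∀ q ∈ S, F q = fun t => (μ {ω | δ q ω ≤ t}).toReal)
    (hFcont : ∀ q ∈ S, Continuous (F q))
    (x' : Ω → Fin d → ℝ)
    (hx' : x' = fun ω q => if q ∈ S then x q + δ q ω else x q) :
    ((∀ q ∈ T.pathFeatures u ∪ T'.pathFeatures v,
        (T.interval u q ∩ T'.interval v q).Nonempty) →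
      (μ {ω | T.evalPath (x' ω) = u ∧ T'.evalPath (x' ω) = v}).toReal
        = (∏ q ∈ (T.pathFeatures u ∪ T'.pathFeatures v) \ S,
              (T.interval u q ∩ T'.interval v q).indicator (fun _ => (1 : ℝ)) (x q)) *
          ∏ q ∈ (T.pathFeatures u ∪ T'.pathFeatures v) ∩ S,
            (extendCDF (F q) (min (T.hi u q) (T'.hi v q) - (x q : EReal))
              - extendCDF (F q) (max (T.lo u q) (T'.lo v q) - (x q : EReal)))) ∧
    ((∃ q ∈ T.pathFeatures u ∪ T'.pathFeatures v, T.interval u q ∩ T'.interval v q = ∅) →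
      μ {ω | T.evalPath (x' ω) = u ∧ T'.evalPath (x' ω) = v} = 0) := by
  have hevent : {ω | T.evalPath (x' ω) = u ∧ T'.evalPath (x' ω) = v}
      = ⋂ q ∈ T.pathFeatures u ∪ T'.pathFeatures v,
          {ω | x' ω q ∈ T.interval u q ∩ T'.interval v q} := by
    ext ω
    simpa using DTree.evalPath_eq_and_evalPath_eq_iff hu hv (x' ω)
  rw [hevent]
  refine ⟨fun hne => ?_, fun ⟨q, hq, hempty⟩ => ?_⟩
  · rw [← measureReal_def, hx', measureReal_biInter_perturbed hindep _ x
      fun q => (T.measurableSet_interval u q).inter (T'.measurableSet_interval v q)]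
    congr 1
    refine Finset.prod_congr rfl fun q hq => ?_
    obtain ⟨hqK, hqS⟩ := Finset.mem_inter.1 hq
    obtain ⟨y, hy⟩ := hne q hqK
    rw [DTree.interval_inter_interval] at hy ⊢
    exact measureReal_add_mem_Ico (hδmeas q hqS) (hF q hqS) (hFcont q hqS) (x q)
      (hy.1.trans hy.2.le)
  · exact measure_mono_null (biInter_subset_of_mem hq) (by simp [hempty])
end

section
/- Let f be the output of a tree ensemble (T_1,…,T_m) over ℝ^d with combined leaf set 𝓛 = ∪_{i=1}^m 𝓛(T_i), let x ∈ ℝ^d, S ⊆ {1,…,d}, c := f(x), and let x' be the perturbed input obtained from x by adding independent noise δ_q with continuous c.d.f. F_q to each coordinate q ∈ S and leaving coordinates outside S unchanged. Then the squared prediction gap admits the exact closed form PG²(x,S) = E[(f(x') − f(x))²] = c² + Σ_{u,v∈𝓛, u≠v} y_u·y_v·Π(u,v) + Σ_{u∈𝓛} Π(u)·y_u·(y_u − 2c), where Π(u,v) is the probability that x' simultaneously reaches leaf u (in its tree) and leaf v (in its tree), and Π(u) is the probability that x' reaches leaf u in its tree. -/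
/-!
Each tree outputs `∑ₗ y_l · 1[x reaches l]`, so `f(x') - c` is a linear combination of leaf
indicators minus a constant. Indicators are idempotent and multiply to the indicator of the
intersection, so expanding the square and integrating term by term turns every product of
indicators into the probability that `x'` reaches both leaves.
-/

open MeasureTheory ProbabilityTheory

namespace DTree

variable {d : ℕ}

lemma subtreeAt_evalPath (T : DTree d) (x : Fin d → ℝ) :
    T.subtreeAt (T.evalPath x) = some (leaf (T.eval x)) := by
  induction T with
  | leaf y => rfl
  | node q t a b iha ihb =>
    simp only [evalPath, eval]
    split <;> assumption

lemma leafVal_evalPath (T : DTree d) (x : Fin d → ℝ) :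
    T.leafVal (T.evalPath x) = T.eval x := by
  rw [leafVal, subtreeAt_evalPath]

lemma evalPath_mem_leafPaths (T : DTree d) (x : Fin d → ℝ) :
    T.evalPath x ∈ T.leafPaths := by
  induction T with
  | leaf y => exact Finset.mem_singleton_self _
  | node q t a b iha ihb =>
    simp only [evalPath, leafPaths, Finset.mem_union, Finset.mem_image]
    split
    · exact Or.inl ⟨_, iha, rfl⟩
    · exact Or.inr ⟨_, ihb, rfl⟩

lemma measurableSet_evalPath_eq (T : DTree d) (p : List Bool) :
    MeasurableSet {x : Fin d → ℝ | T.evalPath x = p} := by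
  induction T generalizing p with
  | leaf y => exact MeasurableSet.const ([] = p)
  | node q t a b iha ihb =>
    have hsplit : MeasurableSet {x : Fin d → ℝ | x q < t} :=
      measurableSet_lt (measurable_pi_apply q) measurable_const
    rcases p with _ | ⟨_ | _, p⟩
    · convert MeasurableSet.empty
      ext x
      simp only [evalPath, Set.mem_ofPred_eq, Set.mem_empty_iff_false, iff_false]
      split <;> simp
    · convert hsplit.inter (iha p) using 1
      ext x
      simp only [evalPath, Set.mem_ofPred_eq, Set.mem_inter_iff]
      split <;> simp_all
    · convert hsplit.compl.inter (ihb p) using 1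
      ext x
      simp only [evalPath, Set.mem_ofPred_eq, Set.mem_inter_iff, Set.mem_compl_iff]
      split <;> simp_all

lemma eval_eq_sum_leafPaths (T : DTree d) (x : Fin d → ℝ) :
    T.eval x = ∑ p ∈ T.leafPaths, T.leafVal p * {z | T.evalPath z = p}.indicator 1 x := by
  have hterm : ∀ p, T.leafVal p * {z | T.evalPath z = p}.indicator 1 x
      = if T.evalPath x = p then T.leafVal p else 0 := fun p => by
    by_cases h : T.evalPath x = p <;> simp [Set.indicator, h]
  simp only [hterm, Finset.sum_ite_eq, if_pos (evalPath_mem_leafPaths T x), leafVal_evalPath]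

end DTree

lemma sq_sum_mul_idempotent_sub {R ι : Type*} [CommRing R] [DecidableEq ι] (L : Finset ι)
    (Y χ : ι → R) (hχ : ∀ u, χ u * χ u = χ u) (c : R) :
    (∑ u ∈ L, Y u * χ u - c) ^ 2
      = c ^ 2 + ∑ u ∈ L, ∑ v ∈ L.erase u, Y u * Y v * (χ u * χ v)
        + ∑ u ∈ L, χ u * Y u * (Y u - 2 * c) := by
  have hsq : (∑ u ∈ L, Y u * χ u) ^ 2
      = ∑ u ∈ L, (Y u * Y u * χ u + ∑ v ∈ L.erase u, Y u * Y v * (χ u * χ v)) := by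
    rw [sq, Finset.sum_mul_sum]
    refine Finset.sum_congr rfl fun u hu => ?_
    rw [← Finset.add_sum_erase _ _ hu]
    congr 1
    · linear_combination (Y u * Y u) * hχ u
    · exact Finset.sum_congr rfl fun v _ => by ring
  have hlinear : ∑ u ∈ L, χ u * Y u * (Y u - 2 * c)
      = ∑ u ∈ L, Y u * Y u * χ u - 2 * c * ∑ u ∈ L, Y u * χ u := by
    rw [Finset.mul_sum, ← Finset.sum_sub_distrib]
    exact Finset.sum_congr rfl fun u _ => by ring
  rw [sub_sq, hsq, Finset.sum_add_distrib, hlinear]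
  ring

theorem integral_sq_sum_indicator_sub {Ω ι : Type*} [MeasurableSpace Ω] [DecidableEq ι]
    (μ : Measure Ω) [IsProbabilityMeasure μ] (L : Finset ι)
    (Y : ι → ℝ) {A : ι → Set Ω} (hA : ∀ u, MeasurableSet (A u)) (c : ℝ) :
    ∫ ω, (∑ u ∈ L, Y u * (A u).indicator 1 ω - c) ^ 2 ∂μ
      = c ^ 2 + ∑ u ∈ L, ∑ v ∈ L.erase u, Y u * Y v * μ.real (A u ∩ A v)
        + ∑ u ∈ L, μ.real (A u) * Y u * (Y u - 2 * c) := by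
  have hpoint : ∀ ω, (∑ u ∈ L, Y u * (A u).indicator 1 ω - c) ^ 2
      = c ^ 2 + ∑ u ∈ L, ∑ v ∈ L.erase u, Y u * Y v * (A u ∩ A v).indicator 1 ω
        + ∑ u ∈ L, (A u).indicator 1 ω * (Y u * (Y u - 2 * c)) := fun ω => by
    have hidem : ∀ u, (A u).indicator (1 : Ω → ℝ) ω * (A u).indicator 1 ω = (A u).indicator 1 ω :=
      fun u => by rw [← Pi.mul_apply, ← Set.inter_indicator_one, Set.inter_self]
    rw [sq_sum_mul_idempotent_sub L Y _ hidem]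
    simp only [Set.inter_indicator_one, Pi.mul_apply, mul_assoc]
  have hint_pair : ∀ u v, Integrable (fun ω => Y u * Y v * (A u ∩ A v).indicator 1 ω) μ :=
    fun u v => ((integrable_const 1).indicator ((hA u).inter (hA v))).const_mul _
  have hint_pairs : ∀ u, Integrable
      (fun ω => ∑ v ∈ L.erase u, Y u * Y v * (A u ∩ A v).indicator 1 ω) μ :=
    fun u => integrable_finsetSum _ fun v _ => hint_pair u v
  have hint_single : ∀ u, Integrable (fun ω => (A u).indicator 1 ω * (Y u * (Y u - 2 * c))) μ :=
    fun u => ((integrable_const 1).indicator (hA u)).mul_const _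
  simp_rw [hpoint]
  rw [integral_add ((integrable_const _).fun_add (integrable_finsetSum _ fun u _ => hint_pairs u))
      (integrable_finsetSum _ fun u _ => hint_single u),
    integral_add (integrable_const _) (integrable_finsetSum _ fun u _ => hint_pairs u),
    integral_const, probReal_univ, one_smul, integral_finsetSum _ fun u _ => hint_pairs u,
    integral_finsetSum _ fun u _ => hint_single u]
  congr 1
  · congr 1
    refine Finset.sum_congr rfl fun u _ => ?_
    rw [integral_finsetSum _ fun v _ => hint_pair u v]
    refine Finset.sum_congr rfl fun v _ => ?_
    rw [integral_const_mul, integral_indicator_one ((hA u).inter (hA v))]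
  · refine Finset.sum_congr rfl fun u _ => ?_
    rw [integral_mul_const, integral_indicator_one (hA u), mul_assoc]

theorem pg_squared_closed_form_general {d m : ℕ} (Ts : Fin m → DTree d)
    (x : Fin d → ℝ) (S : Finset (Fin d))
    {Ω : Type*} [MeasurableSpace Ω] (μ : MeasureTheory.Measure Ω)
    [MeasureTheory.IsProbabilityMeasure μ]
    (δ : Fin d → Ω → ℝ) (hδmeas : ∀ q ∈ S, Measurable (δ q))
    (x' : Ω → Fin d → ℝ)
    (hx' : x' = fun ω q => if q ∈ S then x q + δ q ω else x q)
    (c : ℝ)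
    (L : Finset ((_ : Fin m) × List Bool))
    (hL : L = Finset.univ.sigma fun i : Fin m => (Ts i).leafPaths) :
    ∫ ω, (∑ i, (Ts i).eval (x' ω) - c) ^ 2 ∂μ
      = c ^ 2
        + (∑ u ∈ L, ∑ v ∈ L.erase u,
            (Ts u.1).leafVal u.2 * (Ts v.1).leafVal v.2 *
              (μ {ω | (Ts u.1).evalPath (x' ω) = u.2 ∧ (Ts v.1).evalPath (x' ω) = v.2}).toReal)
        + ∑ u ∈ L,
            (μ {ω | (Ts u.1).evalPath (x' ω) = u.2}).toReal *
              (Ts u.1).leafVal u.2 * ((Ts u.1).leafVal u.2 - 2 * c) := by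
  have hx'meas : Measurable x' := by
    refine hx' ▸ measurable_pi_lambda _ fun q => ?_
    by_cases hq : q ∈ S
    · simpa only [hq, if_true] using (hδmeas q hq).const_add (x q)
    · simpa only [hq, if_false] using measurable_const
  have hleaves : ∀ ω, ∑ i, (Ts i).eval (x' ω) = ∑ u ∈ L,
      (Ts u.1).leafVal u.2 * (x' ⁻¹' {z | (Ts u.1).evalPath z = u.2}).indicator 1 ω := by
    intro ω
    rw [hL, Finset.sum_sigma]
    exact Finset.sum_congr rfl fun i _ => (Ts i).eval_eq_sum_leafPaths (x' ω)
  simp_rw [hleaves]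
  exact integral_sq_sum_indicator_sub μ L _
    (fun u => hx'meas (DTree.measurableSet_evalPath_eq _ _)) c

/-- For the output `f` of a tree ensemble `(T_1, …, T_m)` with combined leaf
set `𝓛`, a point `x`, a set `S` of perturbed features, `c = f(x)`, and the perturbed input `x'`
(independent noise with continuous c.d.f.s added on coordinates in `S`), the squared prediction
gap admits the exact closed form
`PG²(x,S) = E[(f(x') − f(x))²]
  = c² + Σ_{u ≠ v ∈ 𝓛} y_u y_v Π(u,v) + Σ_{u ∈ 𝓛} Π(u) y_u (y_u − 2c)`,
where `Π(u,v)` is the probability that `x'` simultaneously reaches leaf `u` (in its tree) and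
leaf `v` (in its tree), and `Π(u)` is the probability that `x'` reaches leaf `u` in its tree. -/
theorem pg_squared_closed_form {d m : ℕ} (Ts : Fin m → DTree d)
    (x : Fin d → ℝ) (S : Finset (Fin d))
    {Ω : Type*} [MeasurableSpace Ω] (μ : MeasureTheory.Measure Ω)
    [MeasureTheory.IsProbabilityMeasure μ]
    (δ : Fin d → Ω → ℝ) (hδmeas : ∀ q ∈ S, Measurable (δ q))
    (hindep : ProbabilityTheory.iIndepFun
      (m := fun _ : {q : Fin d // q ∈ S} => (inferInstance : MeasurableSpace ℝ))
      (fun q : {q : Fin d // q ∈ S} => δ q.1) μ)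
    (hFcont : ∀ q ∈ S, Continuous fun t : ℝ => (μ {ω | δ q ω ≤ t}).toReal)
    (x' : Ω → Fin d → ℝ)
    (hx' : x' = fun ω q => if q ∈ S then x q + δ q ω else x q)
    (c : ℝ) (hc : c = ∑ i, (Ts i).eval x)
    (L : Finset ((_ : Fin m) × List Bool))
    (hL : L = Finset.univ.sigma fun i : Fin m => (Ts i).leafPaths) :
    ∫ ω, (∑ i, (Ts i).eval (x' ω) - c) ^ 2 ∂μ
      = c ^ 2
        + (∑ u ∈ L, ∑ v ∈ L.erase u,
            (Ts u.1).leafVal u.2 * (Ts v.1).leafVal v.2 *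
              (μ {ω | (Ts u.1).evalPath (x' ω) = u.2 ∧ (Ts v.1).evalPath (x' ω) = v.2}).toReal)
        + ∑ u ∈ L,
            (μ {ω | (Ts u.1).evalPath (x' ω) = u.2}).toReal *
              (Ts u.1).leafVal u.2 * ((Ts u.1).leafVal u.2 - 2 * c) :=
  pg_squared_closed_form_general Ts x S μ δ hδmeas x' hx' c L hL
end
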